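/- For all m, n ∈ ℕ, c_{m,n} − c_{m,n}⁻¹ = (q − q⁻¹) · (P₁₁ + P₂₂), where P₁₁ (resp. P₂₂) is the F-linear endomorphism of V_{m+n} ⊗[F] V_{m+n} fixing each basis vector e_{ι₁ i} ⊗ e_{ι₁ j} with i, j ∈ Fin m (resp. each e_{ι₂ i} ⊗ e_{ι₂ j} with i, j ∈ Fin n) and annihilating all other basis vectors. (This is the GL_m × GL_n specialization of the modified skein relation in the paper's Lemma on Rep_q L_t: the HOMFLY relation holds only on the one-coloured sectors, while mixed crossings are involutive.) -/

import Mathlib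

/-! On each one-coloured sector the Levi braiding is a copy of `β_N`, which satisfies the HOMFLY
skein relation `β² = (q - q⁻¹) β + 1`; on the mixed sectors it is the flip, an involution
annihilated by `P₁₁ + P₂₂`. Hence `c² = (q - q⁻¹) (P₁₁ + P₂₂) c + 1` with `P₁₁ + P₂₂` commuting
with `c`, so `c - (q - q⁻¹) (P₁₁ + P₂₂)` is a two-sided inverse of `c`. -/

open scoped TensorProduct

set_option synthInstance.maxHeartbeats 1000000
set_option maxHeartbeats 1000000
noncomputable section

abbrev F : Type := RatFunc ℂ

def q : F := RatFunc.X

abbrev V (N : ℕ) : Type := Fin N → F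

def bV (N : ℕ) : Module.Basis (Fin N) F (V N) := Pi.basisFun F (Fin N)

def e {N : ℕ} (i : Fin N) : V N := bV N i

def bVV (N : ℕ) : Module.Basis (Fin N × Fin N) F (V N ⊗[F] V N) :=
  (bV N).tensorProduct (bV N)

/-- The HOMFLY R-matrix β_N. -/
def β (N : ℕ) : V N ⊗[F] V N →ₗ[F] V N ⊗[F] V N :=
  (bVV N).constr F fun p =>
    if p.1 = p.2 then q • (e p.1 ⊗ₜ[F] e p.1)
    else if p.1 < p.2 then e p.2 ⊗ₜ[F] e p.1
    else e p.2 ⊗ₜ[F] e p.1 + (q - q⁻¹) • (e p.1 ⊗ₜ[F] e p.2)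

/-- Linear inclusion induced by a map of index sets. -/
def emb {a N : ℕ} (f : Fin a → Fin N) : V a →ₗ[F] V N :=
  (bV a).constr F fun i => e (f i)

def ι₁ (m n : ℕ) : Fin m → Fin (m + n) := Fin.castAdd n
def ι₂ (m n : ℕ) : Fin n → Fin (m + n) := Fin.natAdd m

/-- The Levi braiding c_{m,n}. -/
def levi (m n : ℕ) : V (m + n) ⊗[F] V (m + n) →ₗ[F] V (m + n) ⊗[F] V (m + n) :=
  (bVV (m + n)).constr F fun p =>
    if ha : (p.1 : ℕ) < m then
      if hb : (p.2 : ℕ) < m then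
        TensorProduct.map (emb (ι₁ m n)) (emb (ι₁ m n))
          (β m (e ⟨p.1, ha⟩ ⊗ₜ[F] e ⟨p.2, hb⟩))
      else e p.2 ⊗ₜ[F] e p.1
    else
      if hb : (p.2 : ℕ) < m then e p.2 ⊗ₜ[F] e p.1
      else
        TensorProduct.map (emb (ι₂ m n)) (emb (ι₂ m n))
          (β n (e ⟨(p.1 : ℕ) - m, by have := p.1.isLt; omega⟩ ⊗ₜ[F]
                e ⟨(p.2 : ℕ) - m, by have := p.2.isLt; omega⟩))

/-- Partial trace over the second tensor factor. -/
def ptr {N : ℕ} (Φ : V N ⊗[F] V N →ₗ[F] V N ⊗[F] V N) : V N →ₗ[F] V N :=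
  (bV N).constr F fun i =>
    ∑ j : Fin N,
      (TensorProduct.rid F (V N))
        (TensorProduct.map LinearMap.id (LinearMap.proj j) (Φ (e i ⊗ₜ[F] e j)))

/-- Quantum integer [n]_q. -/
def qint (n : ℤ) : F := (q ^ n - q ^ (-n)) / (q - q⁻¹)

/-- The projection `P₁₁` onto the span of the green-green basis vectors
`e (ι₁ i) ⊗ e (ι₁ j)`. -/
def P11 (m n : ℕ) : V (m + n) ⊗[F] V (m + n) →ₗ[F] V (m + n) ⊗[F] V (m + n) :=
  (bVV (m + n)).constr F fun p =>
    if (p.1 : ℕ) < m ∧ (p.2 : ℕ) < m then e p.1 ⊗ₜ[F] e p.2 else 0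

/-- The projection `P₂₂` onto the span of the red-red basis vectors
`e (ι₂ i) ⊗ e (ι₂ j)`. -/
def P22 (m n : ℕ) : V (m + n) ⊗[F] V (m + n) →ₗ[F] V (m + n) ⊗[F] V (m + n) :=
  (bVV (m + n)).constr F fun p =>
    if m ≤ (p.1 : ℕ) ∧ m ≤ (p.2 : ℕ) then e p.1 ⊗ₜ[F] e p.2 else 0

lemma bVV_apply (N : ℕ) (i j : Fin N) : bVV N (i, j) = e i ⊗ₜ[F] e j :=
  Module.Basis.tensorProduct_apply _ _ _ _

lemma β_tmul (N : ℕ) (i j : Fin N) :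
    β N (e i ⊗ₜ[F] e j) =
      if i = j then q • (e i ⊗ₜ[F] e i)
      else if i < j then e j ⊗ₜ[F] e i
      else e j ⊗ₜ[F] e i + (q - q⁻¹) • (e i ⊗ₜ[F] e j) := by
  conv_lhs => rw [← bVV_apply, β, Module.Basis.constr_basis]

lemma β_comp_β (N : ℕ) : β N ∘ₗ β N = (q - q⁻¹) • β N + LinearMap.id := by
  have hq : q * q = (q - q⁻¹) * q + 1 := by
    have : q ≠ 0 := RatFunc.X_ne_zero
    field_simp; ring
  refine (bVV N).ext fun ⟨i, j⟩ => ?_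
  simp only [bVV_apply, LinearMap.comp_apply, LinearMap.add_apply, LinearMap.smul_apply,
    LinearMap.id_apply]
  rcases lt_trichotomy i j with h | rfl | h
  · rw [β_tmul, if_neg h.ne, if_pos h, β_tmul, if_neg h.ne', if_neg (not_lt.mpr h.le)]
    abel
  · rw [β_tmul, if_pos rfl, map_smul, β_tmul, if_pos rfl, smul_smul, hq, add_smul, mul_smul,
      one_smul]
  · rw [β_tmul, if_neg h.ne', if_neg (not_lt.mpr h.le), map_add, map_smul, β_tmul, if_neg h.ne,
      if_pos h, β_tmul, if_neg h.ne', if_neg (not_lt.mpr h.le)]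
    abel

lemma emb_e {a N : ℕ} (f : Fin a → Fin N) (i : Fin a) : emb f (e i) = e (f i) :=
  Module.Basis.constr_basis _ _ _ _

lemma skein_apply_of_intertwines {K M N : Type*} [CommRing K] [AddCommGroup M] [Module K M]
    [AddCommGroup N] [Module K N] {T P : M →ₗ[K] M} {E : N →ₗ[K] M} {B : N →ₗ[K] N} {t : K}
    (hB : B ∘ₗ B = t • B + LinearMap.id) (hT : T ∘ₗ E = E ∘ₗ B) (hP : P ∘ₗ E = E) (y : N) :
    T (T (E y)) = t • P (T (E y)) + E y ∧ P (T (E y)) = T (P (E y)) := by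
  have hB' := LinearMap.congr_fun hB
  have hT' := LinearMap.congr_fun hT
  have hP' := LinearMap.congr_fun hP
  simp only [LinearMap.comp_apply, LinearMap.add_apply, LinearMap.smul_apply,
    LinearMap.id_apply] at hB' hT' hP'
  simp only [hT', hP', hB', map_add, map_smul, and_self]

lemma mul_sub_eq_one_of_mul_self_eq {R : Type*} [Ring R] {x s : R} (hx : x * x = s * x + 1)
    (hs : Commute s x) : x * (x - s) = 1 ∧ (x - s) * x = 1 := by
  constructor
  · rw [mul_sub, hx, hs.eq]; abel
  · rw [sub_mul, hx]; abel

section Levi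

variable {m n : ℕ}

lemma exists_ι₁_eq_or_exists_ι₂_eq (a : Fin (m + n)) : (∃ i, ι₁ m n i = a) ∨ ∃ j, ι₂ m n j = a :=
  Fin.addCases (fun i => Or.inl ⟨i, rfl⟩) (fun j => Or.inr ⟨j, rfl⟩) a

lemma levi_tmul (a b : Fin (m + n)) :
    levi m n (e a ⊗ₜ[F] e b) =
      if ha : (a : ℕ) < m then
        if hb : (b : ℕ) < m then
          TensorProduct.map (emb (ι₁ m n)) (emb (ι₁ m n)) (β m (e ⟨a, ha⟩ ⊗ₜ[F] e ⟨b, hb⟩))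
        else e b ⊗ₜ[F] e a
      else
        if hb : (b : ℕ) < m then e b ⊗ₜ[F] e a
        else
          TensorProduct.map (emb (ι₂ m n)) (emb (ι₂ m n))
            (β n (e ⟨(a : ℕ) - m, by omega⟩ ⊗ₜ[F] e ⟨(b : ℕ) - m, by omega⟩)) := by
  rw [← bVV_apply, levi, Module.Basis.constr_basis]

lemma levi_tmul_ι₁_ι₂ (i : Fin m) (j : Fin n) :
    levi m n (e (ι₁ m n i) ⊗ₜ[F] e (ι₂ m n j)) = e (ι₂ m n j) ⊗ₜ[F] e (ι₁ m n i) := by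
  simp [levi_tmul, ι₁, ι₂]

lemma levi_tmul_ι₂_ι₁ (j : Fin n) (i : Fin m) :
    levi m n (e (ι₂ m n j) ⊗ₜ[F] e (ι₁ m n i)) = e (ι₁ m n i) ⊗ₜ[F] e (ι₂ m n j) := by
  simp [levi_tmul, ι₁, ι₂]

lemma levi_comp_map_emb_ι₁ :
    levi m n ∘ₗ TensorProduct.map (emb (ι₁ m n)) (emb (ι₁ m n)) =
      TensorProduct.map (emb (ι₁ m n)) (emb (ι₁ m n)) ∘ₗ β m := by
  refine (bVV m).ext fun ⟨i, j⟩ => ?_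
  simp [bVV_apply, emb_e, levi_tmul, ι₁]

lemma levi_comp_map_emb_ι₂ :
    levi m n ∘ₗ TensorProduct.map (emb (ι₂ m n)) (emb (ι₂ m n)) =
      TensorProduct.map (emb (ι₂ m n)) (emb (ι₂ m n)) ∘ₗ β n := by
  refine (bVV n).ext fun ⟨i, j⟩ => ?_
  simp [bVV_apply, emb_e, levi_tmul, ι₂]

lemma P11_add_P22_tmul (a b : Fin (m + n)) :
    (P11 m n + P22 m n) (e a ⊗ₜ[F] e b) =
      if ((a : ℕ) < m ↔ (b : ℕ) < m) then e a ⊗ₜ[F] e b else 0 := by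
  simp only [LinearMap.add_apply, ← bVV_apply, P11, P22, Module.Basis.constr_basis]
  split_ifs <;> first | omega | simp

lemma P11_add_P22_comp_map_emb_ι₁ :
    (P11 m n + P22 m n) ∘ₗ TensorProduct.map (emb (ι₁ m n)) (emb (ι₁ m n)) =
      TensorProduct.map (emb (ι₁ m n)) (emb (ι₁ m n)) := by
  refine (bVV m).ext fun ⟨i, j⟩ => ?_
  rw [bVV_apply, LinearMap.comp_apply, TensorProduct.map_tmul, emb_e, emb_e, P11_add_P22_tmul]
  simp [ι₁]

lemma P11_add_P22_comp_map_emb_ι₂ :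
    (P11 m n + P22 m n) ∘ₗ TensorProduct.map (emb (ι₂ m n)) (emb (ι₂ m n)) =
      TensorProduct.map (emb (ι₂ m n)) (emb (ι₂ m n)) := by
  refine (bVV n).ext fun ⟨i, j⟩ => ?_
  rw [bVV_apply, LinearMap.comp_apply, TensorProduct.map_tmul, emb_e, emb_e, P11_add_P22_tmul]
  simp [ι₂]

lemma P11_add_P22_tmul_ι₁_ι₂ (i : Fin m) (j : Fin n) :
    (P11 m n + P22 m n) (e (ι₁ m n i) ⊗ₜ[F] e (ι₂ m n j)) = 0 := by
  rw [P11_add_P22_tmul]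
  simp [ι₁, ι₂]

lemma P11_add_P22_tmul_ι₂_ι₁ (j : Fin n) (i : Fin m) :
    (P11 m n + P22 m n) (e (ι₂ m n j) ⊗ₜ[F] e (ι₁ m n i)) = 0 := by
  rw [P11_add_P22_tmul]
  simp [ι₁, ι₂]

lemma levi_skein_tmul (a b : Fin (m + n)) :
    levi m n (levi m n (e a ⊗ₜ[F] e b)) =
        (q - q⁻¹) • (P11 m n + P22 m n) (levi m n (e a ⊗ₜ[F] e b)) + e a ⊗ₜ[F] e b ∧
      (P11 m n + P22 m n) (levi m n (e a ⊗ₜ[F] e b)) =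
        levi m n ((P11 m n + P22 m n) (e a ⊗ₜ[F] e b)) := by
  rcases exists_ι₁_eq_or_exists_ι₂_eq a with ⟨i, rfl⟩ | ⟨i, rfl⟩ <;> rcases exists_ι₁_eq_or_exists_ι₂_eq b with ⟨j, rfl⟩ | ⟨j, rfl⟩
  · rw [← emb_e (ι₁ m n) i, ← emb_e (ι₁ m n) j, ← TensorProduct.map_tmul]
    exact skein_apply_of_intertwines (β_comp_β m) levi_comp_map_emb_ι₁
      P11_add_P22_comp_map_emb_ι₁ _
  · rw [levi_tmul_ι₁_ι₂, levi_tmul_ι₂_ι₁, P11_add_P22_tmul_ι₁_ι₂, P11_add_P22_tmul_ι₂_ι₁]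
    simp
  · rw [levi_tmul_ι₂_ι₁, levi_tmul_ι₁_ι₂, P11_add_P22_tmul_ι₁_ι₂, P11_add_P22_tmul_ι₂_ι₁]
    simp
  · rw [← emb_e (ι₂ m n) i, ← emb_e (ι₂ m n) j, ← TensorProduct.map_tmul]
    exact skein_apply_of_intertwines (β_comp_β n) levi_comp_map_emb_ι₂
      P11_add_P22_comp_map_emb_ι₂ _

lemma levi_mul_levi :
    (levi m n * levi m n : Module.End F (V (m + n) ⊗[F] V (m + n))) =
      (q - q⁻¹) • (P11 m n + P22 m n) * levi m n + 1 :=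
  (bVV (m + n)).ext fun ⟨a, b⟩ => by simpa [bVV_apply] using (levi_skein_tmul a b).1

lemma commute_P11_add_P22_levi :
    Commute (P11 m n + P22 m n : Module.End F (V (m + n) ⊗[F] V (m + n))) (levi m n) :=
  (bVV (m + n)).ext fun ⟨a, b⟩ => by simpa [bVV_apply] using (levi_skein_tmul a b).2

end Levi

/-- The modified skein relation for the Levi braiding:
`c_{m,n} - c_{m,n}⁻¹ = (q - q⁻¹) • (P₁₁ + P₂₂)`. -/
theorem levi_modified_skein (m n : ℕ) :
    ∃ cinv : V (m + n) ⊗[F] V (m + n) →ₗ[F] V (m + n) ⊗[F] V (m + n),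
      cinv ∘ₗ levi m n = LinearMap.id ∧ levi m n ∘ₗ cinv = LinearMap.id ∧
      levi m n - cinv = (q - q⁻¹) • (P11 m n + P22 m n) := by
  obtain ⟨hright, hleft⟩ := mul_sub_eq_one_of_mul_self_eq
    (R := Module.End F (V (m + n) ⊗[F] V (m + n))) levi_mul_levi
    (commute_P11_add_P22_levi.smul_left (q - q⁻¹))
  exact ⟨_, hleft, hright, sub_sub_cancel (levi m n) _⟩

end
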